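/- arXiv:2510.25029 — 2 statements merged into one kernel-verified Lean document; each statement's English description precedes it below -/
import Mathlib

section
/- Let ε be a non-trivial scale (lim_ω ε_n = 0). Then B_ε = {z : ℕ → ℂ | lim_ω |z_n|^{ε_n} < ∞} is a subring of the product ring ℂ^ℕ containing all constant sequences, N_ε = {z : ℕ → ℂ | lim_ω |z_n|^{ε_n} = 0} is a maximal ideal of B_ε, and consequently the quotient ℋ^ε(ω) = B_ε/N_ε is a field. Moreover the function z ↦ lim_ω |z_n|^{ε_n} descends to a well-defined multiplicative norm on ℋ^ε(ω). -/
open Filter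

/-- The ω-limit of a sequence in the compact space `[0,∞]`; for an ultrafilter this
equals the `limsup` along the ultrafilter. -/
noncomputable def limw (ω : Ultrafilter ℕ) (a : ℕ → ENNReal) : ENNReal :=
  Filter.limsup a (ω : Filter ℕ)

/-- `lim_ω |z_n|^{η_n}` viewed in `[0,∞]`. -/
noncomputable def limNorm (ω : Ultrafilter ℕ) (η : ℕ → ℝ) (z : ℕ → ℂ) : ENNReal :=
  limw ω (fun n => ENNReal.ofReal (‖z n‖ ^ η n))

/-- A scale is a sequence with values in `(0,1]`. -/
def IsScale (η : ℕ → ℝ) : Prop := ∀ n, 0 < η n ∧ η n ≤ 1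

/-- `lim_ω η_n / η'_n` in `[0,∞]`. -/
noncomputable def scaleRatio (ω : Ultrafilter ℕ) (η η' : ℕ → ℝ) : ENNReal :=
  limw ω (fun n => ENNReal.ofReal (η n / η' n))

/-- `η ≤ η'` iff `lim_ω η_n/η'_n < ∞`. -/
def ScaleLE (ω : Ultrafilter ℕ) (η η' : ℕ → ℝ) : Prop := scaleRatio ω η η' ≠ ⊤

/-- `η < η'` iff `lim_ω η_n/η'_n = 0`. -/
def ScaleLT (ω : Ultrafilter ℕ) (η η' : ℕ → ℝ) : Prop := scaleRatio ω η η' = 0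

/-- A scale is non-trivial if `lim_ω ε_n = 0`. -/
def NontrivialScale (ω : Ultrafilter ℕ) (ε : ℕ → ℝ) : Prop :=
  limw ω (fun n => ENNReal.ofReal (ε n)) = 0

/-- Two scales are equivalent if `C⁻¹ η_n ≤ η'_n ≤ C η_n` ω-almost surely for some `C > 1`. -/
def ScaleEquiv (ω : Ultrafilter ℕ) (η η' : ℕ → ℝ) : Prop :=
  ∃ C : ℝ, 1 < C ∧ {n | C⁻¹ * η n ≤ η' n ∧ η' n ≤ C * η n} ∈ ω

open Topology

/-!
Since `0 < ε_n ≤ 1`, the map `t ↦ t ^ ε_n` is multiplicative and subadditive on `[0, ∞)`,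
and ω-limits in `[0,∞]` preserve products, sums and inverses wherever these are defined. Hence
`‖z‖_ε = lim_ω |z_n|^{ε_n}` is multiplicative and subadditive on `ℂ^ℕ`: the sequences of finite
norm form a subring `B_ε` (`boundedSubring`), those of norm zero an ideal `N_ε` (`nullIdeal`).
If `‖z‖_ε ≠ 0`, then `z_n ≠ 0` for ω-almost all `n`, and the termwise inverse of `z` has norm
`‖z‖_ε⁻¹ < ∞` and inverts `z` modulo `N_ε`; so `N_ε` is maximal. Subadditivity makes `‖·‖_ε`
constant on cosets of `N_ε`.
-/

lemma tendsto_limw (ω : Ultrafilter ℕ) (a : ℕ → ENNReal) : Tendsto a ω (𝓝 (limw ω a)) := by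
  have h : Tendsto a ω (𝓝 (Ultrafilter.map a ω).lim) := by
    rw [Tendsto, ← Ultrafilter.coe_map]
    exact (Ultrafilter.map a ω).le_nhds_lim
  rwa [limw, h.limsup_eq]

lemma limw_eq_of_tendsto {ω : Ultrafilter ℕ} {a : ℕ → ENNReal} {x : ENNReal}
    (h : Tendsto a ω (𝓝 x)) : limw ω a = x :=
  h.limsup_eq

lemma tendsto_limNorm (ω : Ultrafilter ℕ) (ε : ℕ → ℝ) (z : ℕ → ℂ) :
    Tendsto (fun n => ENNReal.ofReal (‖z n‖ ^ ε n)) ω (𝓝 (limNorm ω ε z)) :=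
  tendsto_limw ω _

section LimNorm

variable {ω : Ultrafilter ℕ} {ε : ℕ → ℝ}

lemma limNorm_neg (z : ℕ → ℂ) : limNorm ω ε (-z) = limNorm ω ε z := by
  simp only [limNorm, Pi.neg_apply, norm_neg]

lemma limNorm_one : limNorm ω ε 1 = 1 := by
  simp only [limNorm, limw, Pi.one_apply, norm_one, Real.one_rpow, ENNReal.ofReal_one, limsup_const]

lemma limNorm_eq_zero_of_eventually_eq_zero (hε : ∀ n, ε n ≠ 0) {z : ℕ → ℂ}
    (hz : ∀ᶠ n in ω, z n = 0) : limNorm ω ε z = 0 := by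
  have h0 : (fun n => ENNReal.ofReal (‖z n‖ ^ ε n)) =ᶠ[ω] fun _ => 0 := by
    filter_upwards [hz] with n hn
    simp [hn, Real.zero_rpow (hε n)]
  rw [limNorm, limw, limsup_congr h0, limsup_const]

lemma limNorm_zero (hε : ∀ n, ε n ≠ 0) : limNorm ω ε 0 = 0 :=
  limNorm_eq_zero_of_eventually_eq_zero hε (Eventually.of_forall fun _ => rfl)

lemma eventually_ne_zero_of_limNorm_ne_zero (hε : ∀ n, ε n ≠ 0) {z : ℕ → ℂ}
    (hz : limNorm ω ε z ≠ 0) : ∀ᶠ n in ω, z n ≠ 0 := by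
  by_contra h
  refine hz (limNorm_eq_zero_of_eventually_eq_zero hε ?_)
  simpa using Ultrafilter.eventually_not.mpr h

lemma limNorm_mul {z w : ℕ → ℂ} (hz : limNorm ω ε z ≠ ⊤) (hw : limNorm ω ε w ≠ ⊤) :
    limNorm ω ε (z * w) = limNorm ω ε z * limNorm ω ε w := by
  have h := ENNReal.Tendsto.mul (tendsto_limNorm ω ε z) (Or.inr hw) (tendsto_limNorm ω ε w)
    (Or.inr hz)
  refine limw_eq_of_tendsto (h.congr fun n => ?_)
  rw [Pi.mul_apply, norm_mul, Real.mul_rpow (norm_nonneg _) (norm_nonneg _),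
    ENNReal.ofReal_mul (Real.rpow_nonneg (norm_nonneg _) _)]

lemma limNorm_inv {z : ℕ → ℂ} (hz : ∀ᶠ n in ω, z n ≠ 0) :
    limNorm ω ε z⁻¹ = (limNorm ω ε z)⁻¹ := by
  refine limw_eq_of_tendsto ((tendsto_limNorm ω ε z).inv.congr' ?_)
  filter_upwards [hz] with n hn
  have hpos : 0 < ‖z n‖ := norm_pos_iff.mpr hn
  rw [Pi.inv_apply, norm_inv, Real.inv_rpow hpos.le,
    ENNReal.ofReal_inv_of_pos (Real.rpow_pos_of_pos hpos _)]

lemma ofReal_norm_add_rpow_le {E : Type*} [SeminormedAddGroup E] {p : ℝ} (hp0 : 0 ≤ p)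
    (hp1 : p ≤ 1) (z w : E) :
    ENNReal.ofReal (‖z + w‖ ^ p) ≤ ENNReal.ofReal (‖z‖ ^ p) + ENNReal.ofReal (‖w‖ ^ p) := by
  simp only [← ENNReal.ofReal_rpow_of_nonneg (norm_nonneg _) hp0]
  calc ENNReal.ofReal ‖z + w‖ ^ p ≤ (ENNReal.ofReal ‖z‖ + ENNReal.ofReal ‖w‖) ^ p := by
        gcongr
        rw [← ENNReal.ofReal_add (norm_nonneg _) (norm_nonneg _)]
        exact ENNReal.ofReal_le_ofReal (norm_add_le z w)
    _ ≤ ENNReal.ofReal ‖z‖ ^ p + ENNReal.ofReal ‖w‖ ^ p :=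
        ENNReal.rpow_add_le_add_rpow _ _ hp0 hp1

lemma limNorm_add_le (hε : IsScale ε) (z w : ℕ → ℂ) :
    limNorm ω ε (z + w) ≤ limNorm ω ε z + limNorm ω ε w := by
  calc limNorm ω ε (z + w)
      ≤ limw ω (fun n => ENNReal.ofReal (‖z n‖ ^ ε n) + ENNReal.ofReal (‖w n‖ ^ ε n)) :=
        limsup_le_limsup <| Eventually.of_forall fun n =>
          ofReal_norm_add_rpow_le (hε n).1.le (hε n).2 (z n) (w n)
    _ = limNorm ω ε z + limNorm ω ε w :=
        limw_eq_of_tendsto ((tendsto_limNorm ω ε z).add (tendsto_limNorm ω ε w))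

lemma limNorm_le_of_limNorm_sub_eq_zero (hε : IsScale ε) {z w : ℕ → ℂ}
    (h : limNorm ω ε (z - w) = 0) : limNorm ω ε z ≤ limNorm ω ε w :=
  calc limNorm ω ε z = limNorm ω ε (z - w + w) := by rw [sub_add_cancel]
    _ ≤ limNorm ω ε (z - w) + limNorm ω ε w := limNorm_add_le hε _ _
    _ = limNorm ω ε w := by rw [h, zero_add]

lemma limNorm_eq_of_limNorm_sub_eq_zero (hε : IsScale ε) {z w : ℕ → ℂ}
    (h : limNorm ω ε (z - w) = 0) : limNorm ω ε z = limNorm ω ε w := by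
  refine le_antisymm (limNorm_le_of_limNorm_sub_eq_zero hε h)
    (limNorm_le_of_limNorm_sub_eq_zero hε ?_)
  rwa [← neg_sub, limNorm_neg]

lemma limNorm_const_ne_top (hε : IsScale ε) (c : ℂ) : limNorm ω ε (fun _ => c) ≠ ⊤ := by
  have hbound : ∀ n, ‖c‖ ^ ε n ≤ max ‖c‖ 1 := fun n => by
    rcases le_total ‖c‖ 1 with h | h
    · exact le_max_of_le_right (Real.rpow_le_one (norm_nonneg _) h (hε n).1.le)
    · exact le_max_of_le_left
        ((Real.rpow_le_rpow_of_exponent_le h (hε n).2).trans_eq (Real.rpow_one _))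
  refine ne_top_of_le_ne_top (b := ENNReal.ofReal (max ‖c‖ 1)) ENNReal.ofReal_ne_top ?_
  exact limsup_le_of_le (by isBoundedDefault)
    (Eventually.of_forall fun n => ENNReal.ofReal_le_ofReal (hbound n))

end LimNorm

section Quotient

variable (ω : Ultrafilter ℕ) {ε : ℕ → ℝ} (hε : IsScale ε)

noncomputable def boundedSubring : Subring (ℕ → ℂ) where
  carrier := {z | limNorm ω ε z ≠ ⊤}
  mul_mem' {z w} hz hw := by
    change limNorm ω ε (z * w) ≠ ⊤
    rw [limNorm_mul hz hw]
    exact ENNReal.mul_ne_top hz hw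
  one_mem' := by simp [limNorm_one]
  add_mem' {z w} hz hw :=
    ne_top_of_le_ne_top (ENNReal.add_ne_top.mpr ⟨hz, hw⟩) (limNorm_add_le hε z w)
  zero_mem' := by simp [limNorm_zero fun n => (hε n).1.ne']
  neg_mem' {z} hz := by simpa [limNorm_neg] using hz

noncomputable def nullIdeal : Ideal (boundedSubring ω hε) where
  carrier := {z | limNorm ω ε (z : ℕ → ℂ) = 0}
  zero_mem' := limNorm_zero fun n => (hε n).1.ne'
  add_mem' {z w} hz hw :=
    le_antisymm ((limNorm_add_le hε z w).trans_eq (by rw [hz, hw, add_zero])) zero_le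
  smul_mem' c {z} hz := by
    change limNorm ω ε ((c : ℕ → ℂ) * z) = 0
    rw [limNorm_mul c.2 z.2, show limNorm ω ε z = 0 from hz, mul_zero]

variable {ω hε}

lemma exists_mul_sub_one_mem_nullIdeal {z : boundedSubring ω hε} (hz : z ∉ nullIdeal ω hε) :
    ∃ w : boundedSubring ω hε, z * w - 1 ∈ nullIdeal ω hε := by
  have hε0 : ∀ n, ε n ≠ 0 := fun n => (hε n).1.ne'
  have hne : ∀ᶠ n in ω, (z : ℕ → ℂ) n ≠ 0 := eventually_ne_zero_of_limNorm_ne_zero hε0 hz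
  have hinv : (z : ℕ → ℂ)⁻¹ ∈ boundedSubring ω hε := by
    change limNorm ω ε _ ≠ ⊤
    rw [limNorm_inv hne]
    exact ENNReal.inv_ne_top.mpr hz
  refine ⟨⟨_, hinv⟩, limNorm_eq_zero_of_eventually_eq_zero hε0 ?_⟩
  filter_upwards [hne] with n hn
  change (z : ℕ → ℂ) n * ((z : ℕ → ℂ) n)⁻¹ - 1 = 0
  rw [mul_inv_cancel₀ hn, sub_self]

lemma nullIdeal_isMaximal : (nullIdeal ω hε).IsMaximal := by
  refine Ideal.isMaximal_iff.mpr ⟨fun h => ?_, fun J z hNJ hz hzJ => ?_⟩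
  · exact one_ne_zero ((limNorm_one (ω := ω) (ε := ε)).symm.trans h)
  · obtain ⟨w, hw⟩ := exists_mul_sub_one_mem_nullIdeal hz
    simpa using J.sub_mem (J.mul_mem_right w hzJ) (hNJ hw)

lemma limNorm_eq_of_mk_eq {z w : boundedSubring ω hε}
    (h : Ideal.Quotient.mk (nullIdeal ω hε) z = Ideal.Quotient.mk (nullIdeal ω hε) w) :
    limNorm ω ε (z : ℕ → ℂ) = limNorm ω ε (w : ℕ → ℂ) :=
  limNorm_eq_of_limNorm_sub_eq_zero hε (Ideal.Quotient.mk_eq_mk_iff_sub_mem z w |>.mp h)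

end Quotient

theorem stmt9_general (ω : Ultrafilter ℕ)
    (ε : ℕ → ℝ) (hε : IsScale ε) :
    ∃ B : Subring (ℕ → ℂ), (B : Set (ℕ → ℂ)) = {z | limNorm ω ε z ≠ ⊤} ∧
      (∀ c : ℂ, (fun _ => c) ∈ B) ∧
      ∃ N : Ideal B, (N : Set B) = {z : B | limNorm ω ε (z : ℕ → ℂ) = 0} ∧
        N.IsMaximal ∧ IsField (B ⧸ N) ∧
        (∀ z w : B, Ideal.Quotient.mk N z = Ideal.Quotient.mk N w →
          limNorm ω ε (z : ℕ → ℂ) = limNorm ω ε (w : ℕ → ℂ)) ∧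
        (∀ z w : B, limNorm ω ε ((z : ℕ → ℂ) * (w : ℕ → ℂ)) =
          limNorm ω ε (z : ℕ → ℂ) * limNorm ω ε (w : ℕ → ℂ)) :=
  ⟨boundedSubring ω hε, rfl, limNorm_const_ne_top hε, nullIdeal ω hε, rfl, nullIdeal_isMaximal,
    (Ideal.Quotient.maximal_ideal_iff_isField_quotient _).mp nullIdeal_isMaximal,
    fun _ _ => limNorm_eq_of_mk_eq, fun z w => limNorm_mul z.2 w.2⟩

/-- STATEMENT 9: `B_ε` is a subring of `ℂ^ℕ` containing the constant sequences, `N_ε` is a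
maximal ideal of `B_ε` (so the quotient `ℋ^ε(ω) = B_ε/N_ε` is a field), and
`z ↦ lim_ω |z_n|^{ε_n}` descends to a well-defined multiplicative norm on `ℋ^ε(ω)`. -/
theorem stmt9 (ω : Ultrafilter ℕ) (hω : ∀ s : Set ℕ, sᶜ.Finite → s ∈ ω)
    (ε : ℕ → ℝ) (hε : IsScale ε) (hεnt : NontrivialScale ω ε) :
    ∃ B : Subring (ℕ → ℂ), (B : Set (ℕ → ℂ)) = {z | limNorm ω ε z ≠ ⊤} ∧
      (∀ c : ℂ, (fun _ => c) ∈ B) ∧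
      ∃ N : Ideal B, (N : Set B) = {z : B | limNorm ω ε (z : ℕ → ℂ) = 0} ∧
        N.IsMaximal ∧ IsField (B ⧸ N) ∧
        (∀ z w : B, Ideal.Quotient.mk N z = Ideal.Quotient.mk N w →
          limNorm ω ε (z : ℕ → ℂ) = limNorm ω ε (w : ℕ → ℂ)) ∧
        (∀ z w : B, limNorm ω ε ((z : ℕ → ℂ) * (w : ℕ → ℂ)) =
          limNorm ω ε (z : ℕ → ℂ) * limNorm ω ε (w : ℕ → ℂ)) :=
  stmt9_general ω ε hε
end

section
/- Let (η^k)_{k∈ℕ} be a strictly decreasing sequence of scales, i.e. lim_ω η^{k+1}_n/η^k_n = 0 for every k, and let η' be a scale that is a lower bound with lim_ω η'_n/η^k_n = 0 for every k. Then η' is not a greatest lower bound: there exists a scale η'' such that lim_ω η'_n/η''_n = 0 (so η' < η'') and lim_ω η''_n/η^k_n = 0 for every k (so η'' is still a lower bound of the family). In particular, a strictly decreasing sequence of scales admits no greatest lower bound. -/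
open Filter

/-
The lower bound `η''` is a geometric mean `√(η'_n η^{K(n)}_n)`, where `K(n) → ∞` along `ω` is
chosen diagonally so that, for `ω`-almost every `n`, `η'_n / η^{K(n)}_n ≤ 1/(K(n)+1)` and
`η^{K(n)}_n ≤ η^j_n` for all `j ≤ K(n)`. Then `η'/η'' = √(η'/η^{K}) → 0`, while for each `k`
eventually `η''/η^k ≤ √(η' η^k)/η^k = √(η'/η^k) → 0`.
-/

open Topology

theorem IsScale.div_nonneg {η η' : ℕ → ℝ} (hη : IsScale η) (hη' : IsScale η') (n : ℕ) :
    0 ≤ η n / η' n :=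
  _root_.div_nonneg (hη n).1.le (hη' n).1.le

theorem IsScale.sqrt_mul {η η' : ℕ → ℝ} (hη : IsScale η) (hη' : IsScale η') :
    IsScale fun n => √(η n * η' n) := fun n =>
  ⟨Real.sqrt_pos.2 (mul_pos (hη n).1 (hη' n).1),
    Real.sqrt_le_one.2 (mul_le_one₀ (hη n).2 (hη' n).1.le (hη' n).2)⟩

theorem scaleLT_iff_tendsto {ω : Ultrafilter ℕ} {η η' : ℕ → ℝ} (h : ∀ n, 0 ≤ η n / η' n) :
    ScaleLT ω η η' ↔ Tendsto (fun n => η n / η' n) ω (𝓝 0) := by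
  refine ⟨fun hlt => ?_, fun ht => (ENNReal.tendsto_ofReal ht).limsup_eq.trans ENNReal.ofReal_zero⟩
  have hE : Tendsto (fun n => ENNReal.ofReal (η n / η' n)) ω (𝓝 0) :=
    tendsto_of_liminf_eq_limsup (le_antisymm (hlt ▸ liminf_le_limsup) bot_le) hlt
  exact ((ENNReal.tendsto_toReal ENNReal.zero_ne_top).comp hE).congr fun n =>
    ENNReal.toReal_ofReal (h n)

theorem eventually_antitone_of_scaleLT_succ {ω : Ultrafilter ℕ} {ηs : ℕ → ℕ → ℝ}
    (hηs : ∀ k, IsScale (ηs k)) (hdec : ∀ k, ScaleLT ω (ηs (k + 1)) (ηs k))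
    {j k : ℕ} (hjk : j ≤ k) : ∀ᶠ n in ω, ηs k n ≤ ηs j n := by
  induction k, hjk using Nat.le_induction with
  | base => exact .of_forall fun _ => le_rfl
  | succ k _ ih =>
    have hk := ((scaleLT_iff_tendsto ((hηs _).div_nonneg (hηs k))).1 (hdec k)).eventually
      (gt_mem_nhds one_pos)
    filter_upwards [ih, hk] with n hkj hlt
    exact ((div_lt_one (hηs k n).1).1 hlt).le.trans hkj

theorem exists_tendsto_atTop_eventually_diagonal {l : Filter ℕ} (hl : l ≤ atTop)
    {P : ℕ → ℕ → Prop} (hP : ∀ m, ∀ᶠ n in l, P m n) :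
    ∃ K : ℕ → ℕ, Tendsto K l atTop ∧ ∀ᶠ n in l, P (K n) n := by
  classical
  -- bounding the search by `n` keeps `K n` finite; since `l ≤ atTop` the bound costs nothing
  refine ⟨fun n => Nat.findGreatest (P · n) n, tendsto_atTop.2 fun m => ?_, ?_⟩
  · filter_upwards [hP m, hl (eventually_ge_atTop m)] with n hmn hn
    exact Nat.le_findGreatest hn hmn
  · filter_upwards [hP 0] with n h0
    exact Nat.findGreatest_spec (P := (P · n)) (Nat.zero_le n) h0

theorem div_sqrt_mul_eq_sqrt_div {a : ℝ} (ha : 0 ≤ a) (b : ℝ) : a / √(a * b) = √(a / b) := by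
  rw [Real.sqrt_mul ha, Real.sqrt_div ha, ← div_div, Real.div_sqrt]

theorem sqrt_mul_div_le_sqrt_div {a b c : ℝ} (ha : 0 ≤ a) (hbc : b ≤ c) (hc : 0 < c) :
    √(a * b) / c ≤ √(a / c) := by
  calc √(a * b) / c ≤ √(a * c) / c := by gcongr
    _ = √(a / c) := by
      rw [Real.sqrt_mul ha, Real.sqrt_div ha, mul_div_assoc, Real.sqrt_div_self']
      ring

section GeometricMean

variable {l : Filter ℕ} {a b c : ℕ → ℝ}

theorem tendsto_div_sqrt_mul (ha : ∀ n, 0 ≤ a n) (h : Tendsto (fun n => a n / b n) l (𝓝 0)) :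
    Tendsto (fun n => a n / √(a n * b n)) l (𝓝 0) := by
  simpa only [div_sqrt_mul_eq_sqrt_div (ha _), Real.sqrt_zero] using h.sqrt

theorem tendsto_sqrt_mul_div (ha : ∀ n, 0 ≤ a n) (hc : ∀ n, 0 < c n)
    (hbc : ∀ᶠ n in l, b n ≤ c n) (h : Tendsto (fun n => a n / c n) l (𝓝 0)) :
    Tendsto (fun n => √(a n * b n) / c n) l (𝓝 0) := by
  refine squeeze_zero' (.of_forall fun n => div_nonneg (Real.sqrt_nonneg _) (hc n).le) ?_
    (Real.sqrt_zero ▸ h.sqrt)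
  filter_upwards [hbc] with n hn
  exact sqrt_mul_div_le_sqrt_div (ha n) hn (hc n)

end GeometricMean

/-- STATEMENT 13: a strictly decreasing sequence of scales has no greatest lower bound:
any lower bound `η'` (with `η' < η^k` for all `k`) is exceeded by another lower bound `η''`
with `η' < η''`. -/
theorem stmt13 (ω : Ultrafilter ℕ) (hω : ∀ s : Set ℕ, sᶜ.Finite → s ∈ ω)
    (ηs : ℕ → ℕ → ℝ) (hηs : ∀ k, IsScale (ηs k))
    (hdec : ∀ k, ScaleLT ω (ηs (k + 1)) (ηs k))
    (η' : ℕ → ℝ) (hη' : IsScale η') (hlb : ∀ k, ScaleLT ω η' (ηs k)) :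
    ∃ η'' : ℕ → ℝ, IsScale η'' ∧ ScaleLT ω η' η'' ∧ ∀ k, ScaleLT ω η'' (ηs k) := by
  have hω' : (ω : Filter ℕ) ≤ atTop := Nat.cofinite_eq_atTop ▸ fun s hs => hω s hs
  have hlb' k := (scaleLT_iff_tendsto (hη'.div_nonneg (hηs k))).1 (hlb k)
  obtain ⟨K, hK, hKP⟩ := exists_tendsto_atTop_eventually_diagonal hω'
    (P := fun m n => η' n / ηs m n ≤ 1 / (m + 1) ∧ ∀ j ≤ m, ηs m n ≤ ηs j n) fun m =>
      ((hlb' m).eventually (ge_mem_nhds Nat.one_div_pos_of_nat)).and <|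
        (Set.finite_le_nat m).eventually_all.2 fun _ hj =>
          eventually_antitone_of_scaleLT_succ hηs hdec hj
  set μ := fun n => ηs (K n) n
  have hμ : IsScale μ := fun n => hηs (K n) n
  have hη'μ : Tendsto (fun n => η' n / μ n) ω (𝓝 0) :=
    squeeze_zero' (.of_forall (hη'.div_nonneg hμ)) (hKP.mono fun _ h => h.1)
      (tendsto_one_div_add_atTop_nhds_zero_nat.comp hK)
  refine ⟨fun n => √(η' n * μ n), hη'.sqrt_mul hμ, ?_, fun k => ?_⟩
  · exact (scaleLT_iff_tendsto (hη'.div_nonneg (hη'.sqrt_mul hμ))).2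
      (tendsto_div_sqrt_mul (fun n => (hη' n).1.le) hη'μ)
  · have hμk : ∀ᶠ n in ω, μ n ≤ ηs k n := by
      filter_upwards [hKP, hK.eventually_ge_atTop k] with n hn hkn
      exact hn.2 k hkn
    exact (scaleLT_iff_tendsto ((hη'.sqrt_mul hμ).div_nonneg (hηs k))).2
      (tendsto_sqrt_mul_div (fun n => (hη' n).1.le) (fun n => (hηs k n).1) hμk (hlb' k))
end
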